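/- Let n = 2k with k ≥ 3 and let C be the circulant code with support p = 2 on n neurons. Then the number of neural ring endomorphisms of the neural ring R_C is exactly 2^2 · (n/2)! + 3n. -/

import Mathlib

/-- The circulant code with support `p` on `n` neurons: the codewords are the `n`
cyclic shifts of the vector with `p` consecutive ones followed by zeros. -/
def circCode (n p : ℕ) : Set (Fin n → Bool) :=
  {c | ∃ i : Fin n, ∀ j : Fin n, c j = decide ((j - i).val < p)}

/-- The coordinate function `x_j` of the neural ring of `C` (the ring of functions
`C → 𝔽₂` with pointwise operations). -/
def xvar {n : ℕ} (C : Set (Fin n → Bool)) (j : Fin n) : ↥C → ZMod 2 :=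
  fun c => if (c : Fin n → Bool) j then 1 else 0

/-- A ring endomorphism of the neural ring of `C` is a neural ring endomorphism if
it sends every `x_j` into `{x_1, …, x_n} ∪ {0, 1}`. -/
def IsNeuralEndo {n : ℕ} (C : Set (Fin n → Bool))
    (φ : (↥C → ZMod 2) →+* (↥C → ZMod 2)) : Prop :=
  ∀ j : Fin n, φ (xvar C j) = 0 ∨ φ (xvar C j) = 1 ∨
    ∃ i : Fin n, φ (xvar C j) = xvar C i

namespace NeuralAux

open Fin.CommRing Fin.NatCast

abbrev E {n : ℕ} [NeZero n] (t a : Fin n) : Prop := a = t ∨ a = t + 1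

lemma E_def {n : ℕ} [NeZero n] (t a : Fin n) : E t a ↔ (a = t ∨ a = t + 1) := Iff.rfl

instance {n : ℕ} [NeZero n] (t a : Fin n) : Decidable (E t a) :=
  inferInstanceAs (Decidable (_ ∨ _))

def GCond (n : ℕ) [NeZero n] (g : Fin n → Fin n) : Prop :=
  ∀ t : Fin n, (∀ a, ¬ E t (g a)) ∨ (∀ a, E t (g a)) ∨ ∃ s, ∀ a, E t (g a) ↔ E s a

def NCond {n : ℕ} (C : Set (Fin n → Bool)) (f : ↥C → ↥C) : Prop :=
  ∀ j : Fin n, (fun c => xvar C j (f c)) = 0 ∨ (fun c => xvar C j (f c)) = 1 ∨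
    ∃ i : Fin n, (fun c => xvar C j (f c)) = xvar C i

section Code

variable {n : ℕ} [NeZero n]

def cw (n : ℕ) [NeZero n] (i : Fin n) : Fin n → Bool := fun j => decide ((j - i).val < 2)

lemma cw_mem (i : Fin n) : cw n i ∈ circCode n 2 := ⟨i, fun j => rfl⟩

lemma mem_circ_iff {c : Fin n → Bool} : c ∈ circCode n 2 ↔ ∃ i, c = cw n i := by
  constructor
  · rintro ⟨i, hi⟩; exact ⟨i, funext fun j => hi j⟩
  · rintro ⟨i, rfl⟩; exact cw_mem i

lemma val_one_fin (h2 : 2 ≤ n) : (1 : Fin n).val = 1 := by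
  rw [show (1 : Fin n) = ((1:ℕ) : Fin n) by push_cast; rfl]
  rw [Fin.val_natCast, Nat.mod_eq_of_lt (by omega)]

lemma sub_lt_two_iff (h4 : 4 ≤ n) (j i : Fin n) : (j - i).val < 2 ↔ i = j ∨ i = j - 1 := by
  have h2 : 2 ≤ n := by omega
  constructor
  · intro h
    rcases (by omega : (j - i).val = 0 ∨ (j - i).val = 1) with hv | hv
    · left
      have h0 : j - i = 0 := Fin.ext (by simpa using hv)
      exact (sub_eq_zero.mp h0).symm
    · right
      have h1 : j - i = 1 := Fin.ext (by rw [hv, val_one_fin h2])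
      linear_combination -h1
  · rintro (rfl | rfl)
    · simp
    · have h1 : j - (j - 1) = 1 := by ring
      rw [h1, val_one_fin h2]; omega

lemma cw_injective (h4 : 4 ≤ n) : Function.Injective (cw n) := by
  intro i i' h
  have key : ∀ a b : Fin n, cw n a = cw n b → (a - b).val < 2 := by
    intro a b hab
    have hc := congrFun hab a
    simp only [cw, sub_self] at hc
    have := decide_eq_decide.mp hc
    exact this.mp (by simp)
  have h1 := key i i' h
  have h2 := key i' i h.symm
  have hz : (i - i') + (i' - i) = 0 := by ring
  have hadd : ((i - i') + (i' - i)).val = ((i - i').val + (i' - i).val) % n := Fin.val_add _ _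
  rw [hz] at hadd
  rw [Nat.mod_eq_of_lt (by omega)] at hadd
  simp only [Fin.val_zero] at hadd
  have h0 : i - i' = 0 := Fin.ext (by simp only [Fin.val_zero]; omega)
  exact sub_eq_zero.mp h0

noncomputable def eqv (n : ℕ) [NeZero n] (h4 : 4 ≤ n) : Fin n ≃ ↥(circCode n 2) :=
  Equiv.ofBijective (fun i => ⟨cw n i, cw_mem i⟩)
    ⟨fun i i' h => cw_injective h4 (by simpa using congrArg Subtype.val h),
     fun c => by
       obtain ⟨i, hi⟩ := mem_circ_iff.mp c.2
       exact ⟨i, Subtype.ext hi.symm⟩⟩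

lemma xvar_eqv (h4 : 4 ≤ n) (j a : Fin n) :
    xvar (circCode n 2) j (eqv n h4 a) = if E (j - 1) a then 1 else 0 := by
  have hE : ((j - a).val < 2) ↔ E (j - 1) a := by
    rw [sub_lt_two_iff h4]
    have hj : j - 1 + 1 = j := by ring
    constructor
    · rintro (rfl | h)
      · exact Or.inr (by rw [hj])
      · exact Or.inl h
    · rintro (h | h)
      · exact Or.inr h
      · exact Or.inl (by rw [h, hj])
  show (if cw n a j then (1 : ZMod 2) else 0) = _
  unfold cw
  simp only [decide_eq_true_eq]
  exact if_congr hE rfl rfl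

end Code



def delta {X : Type*} [DecidableEq X] (d : X) : X → ZMod 2 := fun x => if x = d then 1 else 0

lemma zmod2_cases (z : ZMod 2) : z = 0 ∨ z = 1 := by revert z; decide

lemma sum_delta {X : Type*} [Fintype X] [DecidableEq X] : ∑ d : X, delta d = 1 := by
  funext x
  simp [delta, Finset.sum_apply, Finset.sum_ite_eq]

lemma ringHom_exists_point {X : Type*} [Fintype X] [DecidableEq X]
    (ψ : (X → ZMod 2) →+* ZMod 2) : ∃ d : X, ∀ g : X → ZMod 2, ψ g = g d := by
  have h1 : ∑ d : X, ψ (delta d) = 1 := by rw [← map_sum, sum_delta, map_one]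
  have h2 : ∃ d : X, ψ (delta d) = 1 := by
    by_contra h
    push_neg at h
    have hz : ∀ d : X, ψ (delta d) = 0 := fun d => (zmod2_cases _).resolve_right (h d)
    simp [hz] at h1
  obtain ⟨d, hd⟩ := h2
  refine ⟨d, fun g => ?_⟩
  rcases zmod2_cases (g d) with hg | hg
  · have hmul : g * delta d = 0 := by
      funext x
      by_cases hx : x = d <;> simp [delta, hx, hg]
    have h0 : ψ g * ψ (delta d) = 0 := by rw [← map_mul, hmul, map_zero]
    rw [hd, mul_one] at h0
    rw [h0, hg]
  · have hmul : g * delta d = delta d := by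
      funext x
      by_cases hx : x = d <;> simp [delta, hx, hg]
    have h0 : ψ g * ψ (delta d) = ψ (delta d) := by rw [← map_mul, hmul]
    rw [hd, mul_one] at h0
    rw [h0, hg]

def pull {X : Type*} (f : X → X) : (X → ZMod 2) →+* (X → ZMod 2) :=
  Pi.ringHom (fun c => (Pi.evalRingHom (fun _ => ZMod 2) (f c)))

@[simp] lemma pull_apply {X : Type*} (f : X → X) (g : X → ZMod 2) (c : X) :
    pull f g c = g (f c) := rfl

lemma pull_injective {X : Type*} [DecidableEq X] : Function.Injective (pull (X := X)) := by
  intro f f' h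
  funext c
  have h2 := congrFun (congrArg (fun φ => φ (delta (f c))) h) c
  simp only [pull_apply, delta] at h2
  by_contra hne
  rw [if_neg (show ¬(f' c = f c) from fun hh => hne hh.symm)] at h2
  simp at h2

lemma pull_surjective {X : Type*} [Fintype X] [DecidableEq X]
    (φ : (X → ZMod 2) →+* (X → ZMod 2)) : ∃ f : X → X, φ = pull f := by
  have h : ∀ c : X, ∃ d : X, ∀ g : X → ZMod 2, φ g c = g d := fun c =>
    ringHom_exists_point ((Pi.evalRingHom (fun _ => ZMod 2) c).comp φ)
  choose f hf using h
  exact ⟨f, RingHom.ext fun g => funext fun c => hf c g⟩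



section Translate

variable {n : ℕ} [NeZero n]

lemma ite_eq_zero_iff (P : Prop) [Decidable P] : (if P then (1 : ZMod 2) else 0) = 0 ↔ ¬P := by
  split_ifs with h <;> simp [h]

lemma ite_eq_one_iff (P : Prop) [Decidable P] : (if P then (1 : ZMod 2) else 0) = 1 ↔ P := by
  split_ifs with h <;> simp [h]

lemma ite_eq_ite_iff (P Q : Prop) [Decidable P] [Decidable Q] :
    ((if P then (1 : ZMod 2) else 0) = (if Q then 1 else 0)) ↔ (P ↔ Q) := by
  split_ifs with h h' <;> first | simp [h, h'] | (simp [h]; tauto)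

lemma fun_eq_iff (h4 : 4 ≤ n) (u v : ↥(circCode n 2) → ZMod 2) :
    u = v ↔ ∀ a : Fin n, u (eqv n h4 a) = v (eqv n h4 a) := by
  constructor
  · intro h a; rw [h]
  · intro h; funext c
    obtain ⟨a, rfl⟩ := (eqv n h4).surjective c
    exact h a

noncomputable def FF (h4 : 4 ≤ n) (g : Fin n → Fin n) : ↥(circCode n 2) → ↥(circCode n 2) :=
  fun c => eqv n h4 (g ((eqv n h4).symm c))

lemma FF_apply_eqv (h4 : 4 ≤ n) (g : Fin n → Fin n) (a : Fin n) :
    FF h4 g (eqv n h4 a) = eqv n h4 (g a) := by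
  unfold FF; rw [Equiv.symm_apply_apply]

lemma FF_inj (h4 : 4 ≤ n) : Function.Injective (FF h4) := by
  intro g g' h
  funext a
  have h2 := congrFun h (eqv n h4 a)
  rw [FF_apply_eqv, FF_apply_eqv] at h2
  exact (eqv n h4).injective h2

lemma FF_NCond_iff (h4 : 4 ≤ n) (g : Fin n → Fin n) :
    NCond (circCode n 2) (FF h4 g) ↔ GCond n g := by
  have key : ∀ j : Fin n,
      (((fun c => xvar (circCode n 2) j (FF h4 g c)) = 0 ∨
        (fun c => xvar (circCode n 2) j (FF h4 g c)) = 1 ∨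
        ∃ i : Fin n, (fun c => xvar (circCode n 2) j (FF h4 g c)) = xvar (circCode n 2) i))
      ↔ ((∀ a, ¬ E (j-1) (g a)) ∨ (∀ a, E (j-1) (g a)) ∨
          ∃ s, ∀ a, E (j-1) (g a) ↔ E s a) := by
    intro j
    have hx : ∀ a : Fin n, xvar (circCode n 2) j (FF h4 g (eqv n h4 a))
        = if E (j-1) (g a) then 1 else 0 := by
      intro a; rw [FF_apply_eqv, xvar_eqv h4]
    refine or_congr ?_ (or_congr ?_ ?_)
    · rw [fun_eq_iff h4]
      refine forall_congr' fun a => ?_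
      rw [hx a]
      exact (ite_eq_zero_iff _)
    · rw [fun_eq_iff h4]
      refine forall_congr' fun a => ?_
      rw [hx a]
      exact (ite_eq_one_iff _)
    · constructor
      · rintro ⟨i, hi⟩
        refine ⟨i - 1, fun a => ?_⟩
        have h2 := (fun_eq_iff h4 _ _).mp hi a
        rw [hx a, xvar_eqv h4] at h2
        exact (ite_eq_ite_iff _ _).mp h2
      · rintro ⟨s, hs⟩
        refine ⟨s + 1, ?_⟩
        rw [fun_eq_iff h4]
        intro a
        rw [hx a, xvar_eqv h4]
        rw [show s + 1 - 1 = s by ring]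
        exact (ite_eq_ite_iff _ _).mpr (hs a)
  constructor
  · intro h t
    have h2 := (key (t+1)).mp (h (t+1))
    rwa [show t + 1 - 1 = t by ring] at h2
  · intro h j
    exact (key j).mpr (h (j-1))

lemma ncard_step (n : ℕ) [NeZero n] (h4 : 4 ≤ n) :
    {φ : (↥(circCode n 2) → ZMod 2) →+* (↥(circCode n 2) → ZMod 2) |
      IsNeuralEndo (circCode n 2) φ}.ncard
      = {g : Fin n → Fin n | GCond n g}.ncard := by
  classical
  haveI : Fintype ↥(circCode n 2) := Fintype.ofFinite _
  have h1 : {φ : (↥(circCode n 2) → ZMod 2) →+* (↥(circCode n 2) → ZMod 2) |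
      IsNeuralEndo (circCode n 2) φ} = pull '' {f | NCond (circCode n 2) f} := by
    ext φ
    constructor
    · intro hφ
      obtain ⟨f, rfl⟩ := pull_surjective φ
      exact ⟨f, fun j => hφ j, rfl⟩
    · rintro ⟨f, hf, rfl⟩
      intro j
      exact hf j
  have h2 : {f : ↥(circCode n 2) → ↥(circCode n 2) | NCond (circCode n 2) f}
      = (FF h4) '' {g | GCond n g} := by
    ext f
    constructor
    · intro hf
      have hFg : FF h4 (fun a => (eqv n h4).symm (f (eqv n h4 a))) = f := by
        funext c
        unfold FF
        rw [Equiv.apply_symm_apply, Equiv.apply_symm_apply]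
      refine ⟨_, ?_, hFg⟩
      rw [Set.mem_setOf_eq, ← FF_NCond_iff h4]
      rw [hFg]
      exact hf
    · rintro ⟨g, hg, rfl⟩
      exact (FF_NCond_iff h4 g).mpr hg
  rw [h1, Set.ncard_image_of_injective _ pull_injective, h2,
    Set.ncard_image_of_injective _ (FF_inj h4)]

end Translate

section Comb

variable {n k : ℕ} [NeZero n]

lemma cast_nonzero {c : ℕ} (h0 : 0 < c) (hc : c < n) : (c : Fin n) ≠ 0 := by
  intro h
  have hv : ((c : Fin n)).val = c % n := Fin.val_natCast c n
  rw [h, Fin.val_zero, Nat.mod_eq_of_lt hc] at hv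
  omega

lemma one_ne (h : 6 ≤ n) : (1 : Fin n) ≠ 0 := by
  have := cast_nonzero (n := n) (c := 1) (by omega) (by omega)
  simpa using this

lemma two_ne (h : 6 ≤ n) : (2 : Fin n) ≠ 0 := by
  have := cast_nonzero (n := n) (c := 2) (by omega) (by omega)
  simpa using this

lemma three_ne (h : 6 ≤ n) : (3 : Fin n) ≠ 0 := by
  have := cast_nonzero (n := n) (c := 3) (by omega) (by omega)
  simpa using this

def ofPair (hn : n = 2 * k) (w : Fin n) (m : Fin k) : Fin n := w + ((2 * m.val : ℕ) : Fin n)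

def toPair (hn : n = 2 * k) (w x : Fin n) : Fin k :=
  ⟨(x - w).val / 2, by have := (x - w).isLt; have := NeZero.ne n; omega⟩

lemma pairdec (hn : n = 2 * k) (w x : Fin n) (m : Fin k) :
    E (ofPair hn w m) x ↔ toPair hn w x = m := by
  have hmk := m.isLt
  have hd := (x - w).isLt
  have hc : ((2 * m.val : ℕ) : Fin n).val = 2 * m.val := by
    rw [Fin.val_natCast, Nat.mod_eq_of_lt (by omega)]
  have hself : w + (((x - w).val : ℕ) : Fin n) = x := by
    rw [Fin.cast_val_eq_self]; ring
  have A1 : x = ofPair hn w m ↔ (x - w).val = 2 * m.val := by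
    unfold ofPair
    constructor
    · intro h
      have h2 : x - w = ((2 * m.val : ℕ) : Fin n) := by rw [h]; ring
      rw [h2, hc]
    · intro h
      conv_lhs => rw [← hself, h]
  have A2 : x = ofPair hn w m + 1 ↔ (x - w).val = 2 * m.val + 1 := by
    unfold ofPair
    have hc2 : ((2 * m.val + 1 : ℕ) : Fin n).val = 2 * m.val + 1 := by
      rw [Fin.val_natCast, Nat.mod_eq_of_lt (by omega)]
    constructor
    · intro h
      have h2 : x - w = ((2 * m.val + 1 : ℕ) : Fin n) := by rw [h]; push_cast; ring
      rw [h2, hc2]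
    · intro h
      conv_lhs => rw [← hself, h]
      push_cast; ring
  rw [E_def, A1, A2]
  unfold toPair
  rw [Fin.ext_iff]
  simp only []
  constructor
  · intro h; omega
  · intro h; omega

lemma toPair_ofPair (hn : n = 2 * k) (w : Fin n) (m : Fin k) :
    toPair hn w (ofPair hn w m) = m := (pairdec hn w _ m).mp (Or.inl rfl)

lemma ofPair_inj (hn : n = 2 * k) (w : Fin n) {m m' : Fin k}
    (h : ofPair hn w m = ofPair hn w m') : m = m' := by
  rw [← toPair_ofPair hn w m, h, toPair_ofPair]

def pr (x : Fin n) : ℕ := x.val % 2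

lemma pr_lt_two (x : Fin n) : pr x < 2 := Nat.mod_lt _ (by omega)

lemma val_add_mod2 (hn : n = 2 * k) (x y : Fin n) :
    (x + y).val % 2 = (x.val + y.val) % 2 := by
  rw [Fin.val_add]
  exact Nat.mod_mod_of_dvd _ ⟨k, hn⟩

lemma pr_add_one (hn : n = 2 * k) (h2 : 2 ≤ n) (x : Fin n) : pr (x + 1) ≠ pr x := by
  unfold pr
  rw [val_add_mod2 hn, val_one_fin h2]
  omega

lemma pr_ofPair (hn : n = 2 * k) (w : Fin n) (m : Fin k) : pr (ofPair hn w m) = pr w := by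
  have hmk := m.isLt
  unfold pr ofPair
  rw [val_add_mod2 hn, Fin.val_natCast, Nat.mod_eq_of_lt (show 2 * m.val < n by omega)]
  omega

lemma evensub (hn : n = 2 * k) {x y : Fin n} (h : pr x = pr y) :
    ∃ m : Fin k, y = ofPair hn x m := by
  have hd := (y - x).isLt
  have hself : x + (((y - x).val : ℕ) : Fin n) = y := by rw [Fin.cast_val_eq_self]; ring
  have hpar : (x.val + (y - x).val) % 2 = y.val % 2 := by
    rw [← val_add_mod2 hn, show x + (y - x) = y from by ring]
  have he : (y - x).val % 2 = 0 := by unfold pr at h; omega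
  refine ⟨⟨(y - x).val / 2, by omega⟩, ?_⟩
  unfold ofPair
  have h2 : 2 * ((⟨(y - x).val / 2, by omega⟩ : Fin k)).val = (y - x).val := by
    simp only [Fin.val_mk]
    omega
  rw [h2, hself]

lemma start_eq (hn : n = 2 * k) {w s x : Fin n} (hpar : pr s = pr w) (hx : E s x) :
    s = ofPair hn w (toPair hn w x) := by
  obtain ⟨m, rfl⟩ := evensub hn hpar.symm
  rw [(pairdec hn w x m).mp hx]


def gdih (ε : Bool) (c : Fin n) : Fin n → Fin n := fun a => (if ε then a else -a) + c

def gfold (hn : n = 2 * k) (b1 b2 : Bool) (π : Equiv.Perm (Fin k)) : Fin n → Fin n :=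
  fun x => ofPair hn (bif b2 then 1 else 0) (π (toPair hn (bif b1 then 1 else 0) x))

lemma const_GCond (b : Fin n) : GCond n (fun _ => b) := by
  intro t
  by_cases h : E t b
  · exact Or.inr (Or.inl fun _ => h)
  · exact Or.inl fun _ => h

lemma gdih_GCond (ε : Bool) (c : Fin n) : GCond n (gdih ε c) := by
  intro t
  refine Or.inr (Or.inr ?_)
  cases ε
  · refine ⟨c - t - 1, fun a => ?_⟩
    show (-a + c = t ∨ -a + c = t + 1) ↔ (a = c - t - 1 ∨ a = c - t - 1 + 1)
    constructor
    · rintro (h | h)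
      · exact Or.inr (by linear_combination -h)
      · exact Or.inl (by linear_combination -h)
    · rintro (h | h)
      · exact Or.inr (by linear_combination -h)
      · exact Or.inl (by linear_combination -h)
  · refine ⟨t - c, fun a => ?_⟩
    show (a + c = t ∨ a + c = t + 1) ↔ (a = t - c ∨ a = t - c + 1)
    constructor
    · rintro (h | h)
      · exact Or.inl (by linear_combination h)
      · exact Or.inr (by linear_combination h)
    · rintro (h | h)
      · exact Or.inl (by linear_combination h)
      · exact Or.inr (by linear_combination h)

lemma gfold_GCond (hn : n = 2 * k) (h6 : 6 ≤ n) (b1 b2 : Bool) (π : Equiv.Perm (Fin k)) :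
    GCond n (gfold hn b1 b2 π) := by
  set tF : Fin n := bif b2 then 1 else 0 with htF
  set wF : Fin n := bif b1 then 1 else 0 with hwF
  intro t'
  refine Or.inr (Or.inr ?_)
  set c : Fin n := if pr t' = pr tF then t' else t' + 1 with hcdef
  have hc1 : E t' c := by
    rw [hcdef]
    split_ifs
    · exact Or.inl rfl
    · exact Or.inr rfl
  have hcpar : pr c = pr tF := by
    rw [hcdef]
    split_ifs with h
    · exact h
    · have h1 := pr_add_one hn (by omega) t'
      have h2 := pr_lt_two (t' + 1)
      have h3 := pr_lt_two t'
      have h4 := pr_lt_two tF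
      omega
  have hcE : ∀ y : Fin n, pr y = pr tF → (E t' y ↔ y = c) := by
    intro y hy
    constructor
    · intro hE
      by_cases h : pr t' = pr tF
      · have hc3 : c = t' := by rw [hcdef, if_pos h]
        rcases hE with rfl | rfl
        · rw [hc3]
        · exfalso
          exact pr_add_one hn (by omega) t' (hy.trans h.symm)
      · have hc3 : c = t' + 1 := by rw [hcdef, if_neg h]
        rcases hE with rfl | rfl
        · exact absurd hy h
        · rw [hc3]
    · intro h; rw [h]; exact hc1
  have hc2 : c = ofPair hn tF (toPair hn tF c) := start_eq hn hcpar (Or.inl rfl)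
  refine ⟨ofPair hn wF (π.symm (toPair hn tF c)), fun a => ?_⟩
  have hGF : gfold hn b1 b2 π a = ofPair hn tF (π (toPair hn wF a)) := rfl
  rw [hGF, hcE _ (pr_ofPair hn tF _)]
  constructor
  · intro h
    have h2 : π (toPair hn wF a) = toPair hn tF c := ofPair_inj hn tF (h.trans hc2)
    have h3 : toPair hn wF a = π.symm (toPair hn tF c) := by
      rw [← h2, Equiv.symm_apply_apply]
    exact (pairdec hn wF a _).mpr h3
  · intro h
    have h3 := (pairdec hn wF a _).mp h
    show ofPair hn tF (π (toPair hn wF a)) = c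
    rw [h3, Equiv.apply_symm_apply, ← hc2]


lemma four_ne (h : 6 ≤ n) : (4 : Fin n) ≠ 0 := by
  have := cast_nonzero (n := n) (c := 4) (by omega) (by omega)
  simpa using this

lemma E_unique (h6 : 6 ≤ n) {s s' x y : Fin n} (hss' : s ≠ s')
    (hx1 : E s x) (hx2 : E s' x) (hy1 : E s y) (hy2 : E s' y) : x = y := by
  rcases hx1 with rfl | rfl <;> rcases hy1 with rfl | rfl
  · rfl
  · exfalso
    rcases hx2 with h1 | h1 <;> rcases hy2 with h2 | h2
    · exact one_ne h6 (by linear_combination h2 - h1)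
    · exact hss' h1
    · exact two_ne h6 (by linear_combination h2 - h1)
    · exact one_ne h6 (by linear_combination h2 - h1)
  · exfalso
    rcases hx2 with h1 | h1 <;> rcases hy2 with h2 | h2
    · exact one_ne h6 (by linear_combination h1 - h2)
    · exact two_ne h6 (by linear_combination h1 - h2)
    · exact hss' (by linear_combination h1)
    · exact one_ne h6 (by linear_combination h1 - h2)
  · rfl

lemma lemP (hn : n = 2 * k) (h6 : 6 ≤ n) (A : Set (Fin n))
    (hcov : ∀ x, x ∈ A ∨ x - 1 ∈ A) (hdis : ∀ x, ¬(x ∈ A ∧ x - 1 ∈ A)) :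
    ∀ x y, x ∈ A → y ∈ A → pr x = pr y := by
  have hiff : ∀ x : Fin n, x + 1 ∈ A ↔ x ∉ A := by
    intro x
    constructor
    · intro h hx
      exact hdis (x + 1) ⟨h, by rwa [show x + 1 - 1 = x from by ring]⟩
    · intro h
      rcases hcov (x + 1) with h1 | h1
      · exact h1
      · rw [show x + 1 - 1 = x from by ring] at h1; exact absurd h1 h
  have step2 : ∀ x : Fin n, x ∈ A ↔ x + 1 + 1 ∈ A := by
    intro x
    rw [hiff (x + 1), hiff x]
    tauto
  have stepEven : ∀ (m : ℕ) (x : Fin n), x ∈ A ↔ x + ((2 * m : ℕ) : Fin n) ∈ A := by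
    intro m
    induction m with
    | zero => intro x; simp
    | succ m ih =>
      intro x
      have hcast : x + ((2 * (m + 1) : ℕ) : Fin n) = x + ((2 * m : ℕ) : Fin n) + 1 + 1 := by
        push_cast; ring
      rw [hcast]
      exact (ih x).trans (step2 _)
  intro x y hx hy
  by_contra hne
  have hp1 : pr (y + 1) = pr x := by
    have := pr_add_one hn (by omega) y
    have := pr_lt_two x; have := pr_lt_two y; have := pr_lt_two (y + 1)
    omega
  obtain ⟨m, hm⟩ := evensub hn hp1
  have h1 : y + 1 ∈ A := by
    rw [stepEven m.val (y + 1)]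
    rw [show (y + 1) + ((2 * m.val : ℕ) : Fin n) = x from hm.symm]
    exact hx
  exact (hiff y).mp h1 hy


theorem classify (hn : n = 2 * k) (hk : 3 ≤ k) (g : Fin n → Fin n) (hG : GCond n g) :
    (∃ b, g = fun _ => b) ∨ (∃ ε c, g = gdih ε c) ∨
      (∃ b1 b2, ∃ π : Equiv.Perm (Fin k), g = gfold hn b1 b2 π) := by
  have h6 : 6 ≤ n := by omega
  by_cases hcon : ∀ a, g a = g 0
  · exact Or.inl ⟨g 0, funext hcon⟩
  push_neg at hcon
  obtain ⟨a₀, ha₀⟩ := hcon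
  -- no coordinate is full
  have H2 : ∀ t, ¬ ∀ a, E t (g a) := by
    intro t hfull
    have hw : (∃ x, g x = t) ∧ (∃ x, g x = t + 1) := by
      rcases hfull a₀ with h1 | h1 <;> rcases hfull 0 with h2 | h2
      · exact absurd (h1.trans h2.symm) ha₀
      · exact ⟨⟨a₀, h1⟩, ⟨0, h2⟩⟩
      · exact ⟨⟨0, h2⟩, ⟨a₀, h1⟩⟩
      · exact absurd (h1.trans h2.symm) ha₀
    obtain ⟨⟨x1, hx1⟩, ⟨x2, hx2⟩⟩ := hw
    have h1 : ∃ s, ∀ a, E (t - 1) (g a) ↔ E s a := by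
      rcases hG (t - 1) with h | h | h
      · exact absurd (Or.inr (by rw [hx1]; ring)) (h x1)
      · exfalso
        rcases h x2 with h2 | h2
        · exact two_ne h6 (by linear_combination h2 - hx2)
        · exact one_ne h6 (by linear_combination h2 - hx2)
      · exact h
    have h2' : ∃ s, ∀ a, E (t + 1) (g a) ↔ E s a := by
      rcases hG (t + 1) with h | h | h
      · exact absurd (Or.inl hx2) (h x2)
      · exfalso
        rcases h x1 with h2 | h2
        · exact one_ne h6 (by linear_combination hx1 - h2)
        · exact two_ne h6 (by linear_combination hx1 - h2)
      · exact h
    obtain ⟨s₁, hs₁⟩ := h1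
    obtain ⟨s₂, hs₂⟩ := h2'
    have hall : ∀ a, E s₁ a ∨ E s₂ a := by
      intro a
      rcases hfull a with h | h
      · exact Or.inl ((hs₁ a).mp (Or.inr (by rw [h]; ring)))
      · exact Or.inr ((hs₂ a).mp (Or.inl h))
    have hk2 : ¬ E s₁ (s₁ + 2) := by
      rintro (h | h)
      · exact two_ne h6 (by linear_combination h)
      · exact one_ne h6 (by linear_combination h)
    have hk3 : ¬ E s₁ (s₁ + 3) := by
      rintro (h | h)
      · exact three_ne h6 (by linear_combination h)
      · exact two_ne h6 (by linear_combination h)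
    have hk4 : ¬ E s₁ (s₁ + 4) := by
      rintro (h | h)
      · exact four_ne h6 (by linear_combination h)
      · exact three_ne h6 (by linear_combination h)
    have hfind : ∃ x : Fin n, ¬ E s₁ x ∧ ¬ E s₂ x := by
      by_cases hA : s₁ + 2 = s₂
      · refine ⟨s₁ + 4, hk4, ?_⟩
        rintro (h | h)
        · exact two_ne h6 (by linear_combination h - hA)
        · exact one_ne h6 (by linear_combination h - hA)
      by_cases hB : s₁ + 2 = s₂ + 1
      · refine ⟨s₁ + 3, hk3, ?_⟩
        rintro (h | h)
        · exact two_ne h6 (by linear_combination h - hB)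
        · exact one_ne h6 (by linear_combination h - hB)
      · refine ⟨s₁ + 2, hk2, ?_⟩
        rintro (h | h)
        · exact hA h
        · exact hB h
    obtain ⟨x, hxa, hxb⟩ := hfind
    rcases hall x with h | h
    · exact hxa h
    · exact hxb h
  -- every coordinate pair has a pair preimage
  have hσ0 : ∀ t, ∃ s, ∀ a, E t (g a) ↔ E s a := by
    intro t₀
    have h3 : ∀ m : Fin k, ∃ s, ∀ a, E (ofPair hn t₀ m) (g a) ↔ E s a := by
      by_contra hcon3
      push_neg at hcon3
      obtain ⟨m₀, hm₀⟩ := hcon3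
      have hereEmpty : ∀ a, ¬ E (ofPair hn t₀ m₀) (g a) := by
        rcases hG (ofPair hn t₀ m₀) with h | h | h
        · exact h
        · exact absurd h (H2 _)
        · obtain ⟨s, hs⟩ := h
          obtain ⟨a, ha⟩ := hm₀ s
          rcases ha with ⟨hL, hR⟩ | ⟨hL, hR⟩
          · exact absurd ((hs a).mp hL) (fun h => h.elim hR.1 hR.2)
          · exact absurd ((hs a).mpr hR) (fun h => h.elim hL.1 hL.2)
      classical
      set A : Fin k → Finset (Fin n) :=
        fun m => Finset.univ.filter (fun a => E (ofPair hn t₀ m) (g a)) with hA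
      have hcover : (Finset.univ : Finset (Fin n)) ⊆ Finset.univ.biUnion A := by
        intro a _
        rw [Finset.mem_biUnion]
        refine ⟨toPair hn t₀ (g a), Finset.mem_univ _, ?_⟩
        rw [hA]
        simp only [Finset.mem_filter]
        exact ⟨Finset.mem_univ _, (pairdec hn t₀ (g a) _).mpr rfl⟩
      have hbound : ∀ m, (A m).card ≤ 2 := by
        intro m
        rcases hG (ofPair hn t₀ m) with h | h | h
        · have hAe : A m = ∅ := by
            rw [hA, Finset.filter_eq_empty_iff]
            intro a _
            exact h a
          simp [hAe]
        · exact absurd h (H2 _)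
        · obtain ⟨s, hs⟩ := h
          have hsub : A m ⊆ {s, s + 1} := by
            intro a ha
            rw [hA, Finset.mem_filter] at ha
            rcases (hs a).mp ha.2 with h' | h'
            · simp [h']
            · simp [h']
          calc (A m).card ≤ ({s, s + 1} : Finset (Fin n)).card := Finset.card_le_card hsub
            _ ≤ 2 := by
                apply le_trans (Finset.card_insert_le _ _)
                simp
      have hzero : (A m₀).card = 0 := by
        rw [Finset.card_eq_zero, hA, Finset.filter_eq_empty_iff]
        intro a _
        exact hereEmpty a
      have hn_le : n ≤ ∑ m : Fin k, (A m).card := by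
        calc n = (Finset.univ : Finset (Fin n)).card := by simp
          _ ≤ (Finset.univ.biUnion A).card := Finset.card_le_card hcover
          _ ≤ ∑ m : Fin k, (A m).card := Finset.card_biUnion_le
      have hsum : ∑ m : Fin k, (A m).card ≤ 2 * (k - 1) := by
        calc ∑ m : Fin k, (A m).card
            = (A m₀).card + ∑ m ∈ Finset.univ.erase m₀, (A m).card :=
              (Finset.add_sum_erase _ _ (Finset.mem_univ m₀)).symm
          _ ≤ 0 + ∑ m ∈ Finset.univ.erase m₀, 2 := by
              rw [hzero]
              gcongr with m hm
              exact hbound m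
          _ = 2 * (k - 1) := by
              rw [zero_add, Finset.sum_const, Finset.card_erase_of_mem (Finset.mem_univ m₀)]
              simp [mul_comm]
      omega
    obtain ⟨s, hs⟩ := h3 ⟨0, by omega⟩
    have h0 : ofPair hn t₀ ⟨0, by omega⟩ = t₀ := by
      unfold ofPair
      simp
    rw [h0] at hs
    exact ⟨s, hs⟩
  choose σ hσc using hσ0
  by_cases hD : ∃ v, σ v = σ (v + 1)
  · -- folded case
    obtain ⟨v₀, hv₀⟩ := hD
    have hParCls : ∀ w : Fin n, ∀ m m' : Fin k,
        pr (σ (ofPair hn w m)) = pr (σ (ofPair hn w m')) := by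
      intro w
      set A : Set (Fin n) := {x | ∃ m : Fin k, σ (ofPair hn w m) = x} with hAdef
      have hcov : ∀ x, x ∈ A ∨ x - 1 ∈ A := by
        intro x
        have hE : E (ofPair hn w (toPair hn w (g x))) (g x) := (pairdec hn w (g x) _).mpr rfl
        have hEx : E (σ (ofPair hn w (toPair hn w (g x)))) x := (hσc _ x).mp hE
        rcases hEx with h | h
        · exact Or.inl ⟨_, h.symm⟩
        · exact Or.inr ⟨_, by linear_combination -h⟩
      have hdis : ∀ x, ¬(x ∈ A ∧ x - 1 ∈ A) := by
        rintro x ⟨⟨m1, hm1⟩, ⟨m2, hm2⟩⟩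
        have h1 : E (ofPair hn w m1) (g x) := (hσc _ x).mpr (Or.inl hm1.symm)
        have h2 : E (ofPair hn w m2) (g x) := (hσc _ x).mpr (Or.inr (by linear_combination -hm2))
        have hm12 : m1 = m2 := by
          have e1 := (pairdec hn w (g x) m1).mp h1
          have e2 := (pairdec hn w (g x) m2).mp h2
          rw [← e1, e2]
        rw [hm12] at hm1
        exact one_ne h6 (by linear_combination hm2 - hm1)
      intro m m'
      exact lemP hn h6 A hcov hdis _ _ ⟨m, rfl⟩ ⟨m', rfl⟩
    have hsame : ∀ t t', pr t = pr t' → pr (σ t) = pr (σ t') := by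
      intro t t' hp
      obtain ⟨m, hm⟩ := evensub hn hp
      have h0 : ofPair hn t (⟨0, by omega⟩ : Fin k) = t := by
        unfold ofPair; simp
      calc pr (σ t) = pr (σ (ofPair hn t ⟨0, by omega⟩)) := by rw [h0]
        _ = pr (σ (ofPair hn t m)) := hParCls t _ m
        _ = pr (σ t') := by rw [← hm]
    have hParσ : ∀ t t', pr (σ t) = pr (σ t') := by
      have hcase : ∀ u : Fin n, pr (σ u) = pr (σ v₀) := by
        intro u
        by_cases hpu : pr u = pr v₀
        · exact hsame u v₀ hpu
        · have hpu2 : pr u = pr (v₀ + 1) := by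
            have := pr_add_one hn (by omega) v₀
            have := pr_lt_two u; have := pr_lt_two v₀; have := pr_lt_two (v₀ + 1)
            omega
          rw [hsame u (v₀ + 1) hpu2, ← hv₀]
      intro t t'
      rw [hcase t, hcase t']
    have hdisj : ∀ v : Fin n, σ v ≠ σ (v + 1) → ∀ x, ¬(E (σ v) x ∧ E (σ (v + 1)) x) := by
      rintro v hne x ⟨h1, h2⟩
      rcases h1 with h1 | h1 <;> rcases h2 with h2 | h2
      · exact hne (by rw [← h1, h2])
      · have hp : pr (σ v) = pr (σ (v + 1)) := hParσ v (v + 1)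
        have he : σ v = σ (v + 1) + 1 := by rw [← h1, h2]
        rw [he] at hp
        exact pr_add_one hn (by omega) (σ (v + 1)) hp
      · have hp : pr (σ v) = pr (σ (v + 1)) := hParσ v (v + 1)
        have he : σ (v + 1) = σ v + 1 := by rw [← h2, h1]
        rw [he] at hp
        exact pr_add_one hn (by omega) (σ v) hp.symm
      · exact hne (by linear_combination h2 - h1)
    have hattain : ∀ a, σ (g a - 1) = σ (g a) := by
      intro a
      by_contra hne
      have h1 : E (σ (g a - 1)) a := (hσc _ a).mp (Or.inr (by ring))
      have h2 : E (σ (g a)) a := (hσc _ a).mp (Or.inl rfl)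
      have hd := hdisj (g a - 1) (by rwa [show g a - 1 + 1 = g a from by ring]) a
      rw [show g a - 1 + 1 = g a from by ring] at hd
      exact hd ⟨h1, h2⟩
    have hfib : ∀ v, σ (v - 1) = σ v → ∀ x, g x = v ↔ E (σ v) x := by
      intro v hv x
      constructor
      · intro h; exact (hσc v x).mp (Or.inl h)
      · intro hx
        have e1 : E v (g x) := (hσc v x).mpr hx
        have e2 : E (v - 1) (g x) := (hσc (v - 1) x).mpr (by rw [hv]; exact hx)
        rcases e1 with e1 | e1
        · exact e1
        · exfalso
          rcases e2 with e2 | e2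
          · exact two_ne h6 (by linear_combination e2 - e1)
          · exact one_ne h6 (by linear_combination e2 - e1)
    have hadjcon : ∀ v, σ (v - 1) = σ v → σ v = σ (v + 1) → False := by
      intro v hv h1
      have hx1 : E (v - 1) (g (σ v)) := (hσc (v - 1) (σ v)).mpr (Or.inl (by rw [hv]))
      have hx2 : E (v + 1) (g (σ v)) := (hσc (v + 1) (σ v)).mpr (Or.inl (by rw [h1]))
      rcases hx1 with e1 | e1 <;> rcases hx2 with e2 | e2
      · exact two_ne h6 (by linear_combination e1 - e2)
      · exact three_ne h6 (by linear_combination e1 - e2)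
      · exact one_ne h6 (by linear_combination e1 - e2)
      · exact two_ne h6 (by linear_combination e1 - e2)
    have hDstep : ∀ v, σ (v - 1) = σ v → σ (v + 2 - 1) = σ (v + 2) := by
      intro v hv
      have hnot : ∀ a, g a ≠ v + 1 := by
        intro a ha
        have h1 := hattain a
        rw [ha, show v + 1 - 1 = v from by ring] at h1
        exact hadjcon v hv h1
      have hx : E (v + 1) (g (σ (v + 1))) := (hσc (v + 1) _).mpr (Or.inl rfl)
      have hgx : g (σ (v + 1)) = v + 2 := by
        rcases hx with h | h
        · exact absurd h (hnot _)
        · rw [h]; ring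
      have h2 := hattain (σ (v + 1))
      rw [hgx] at h2
      exact h2
    have hDclass0 : ∀ v, σ (v - 1) = σ v →
        ∀ (m : ℕ), σ ((v + ((2 * m : ℕ) : Fin n)) - 1) = σ (v + ((2 * m : ℕ) : Fin n)) := by
      intro v hv m
      induction m with
      | zero => simpa using hv
      | succ m ih =>
        have hc : v + ((2 * (m + 1) : ℕ) : Fin n) = (v + ((2 * m : ℕ) : Fin n)) + 2 := by
          push_cast; ring
        rw [hc]
        exact hDstep _ ih
    have hDpar : ∀ v u, σ (v - 1) = σ v → pr u = pr v → σ (u - 1) = σ u := by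
      intro v u hv hp
      obtain ⟨m, hm⟩ := evensub hn hp.symm
      rw [hm]
      exact hDclass0 v hv m.val
    have hprA : ∀ a, pr (g a) = pr (g 0) := by
      intro a
      by_contra hne
      have hp : pr (g 0 + 1) = pr (g a) := by
        have := pr_add_one hn (by omega) (g 0)
        have := pr_lt_two (g a); have := pr_lt_two (g 0); have := pr_lt_two (g 0 + 1)
        omega
      have h2 : σ ((g 0 + 1) - 1) = σ (g 0 + 1) := hDpar (g a) (g 0 + 1) (hattain a) hp
      rw [show g 0 + 1 - 1 = g 0 from by ring] at h2
      exact hadjcon (g 0) (hattain 0) h2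
    set tb : Bool := decide (pr (g 0) = 1) with htb
    set wb : Bool := decide (pr (σ (g 0)) = 1) with hwb
    set tF : Fin n := bif tb then 1 else 0 with htF
    set wF : Fin n := bif wb then 1 else 0 with hwF
    have hpr0 : pr (0 : Fin n) = 0 := by unfold pr; simp
    have hpr1 : pr (1 : Fin n) = 1 := by unfold pr; rw [val_one_fin (by omega)]
    have hprtF : pr tF = pr (g 0) := by
      rw [htF, htb]
      by_cases h : pr (g 0) = 1
      · simp [h, hpr1]
      · have h0 : pr (g 0) = 0 := by have := pr_lt_two (g 0); omega
        simp [h, h0, hpr0]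
    have hprwF : pr wF = pr (σ (g 0)) := by
      rw [hwF, hwb]
      by_cases h : pr (σ (g 0)) = 1
      · simp [h, hpr1]
      · have h0 : pr (σ (g 0)) = 0 := by have := pr_lt_two (σ (g 0)); omega
        simp [h, h0, hpr0]
    set π₀ : Fin k → Fin k := fun m => toPair hn tF (g (ofPair hn wF m)) with hπ₀
    have hval : ∀ m : Fin k, g (ofPair hn wF m) = ofPair hn tF (π₀ m) := by
      intro m
      exact start_eq hn (by rw [hprtF]; exact hprA _) (Or.inl rfl)
    have hσval : ∀ a, σ (g a) = ofPair hn wF (toPair hn wF a) := by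
      intro a
      have hx : E (σ (g a)) a := (hσc (g a) a).mp (Or.inl rfl)
      exact start_eq hn (by rw [hprwF]; exact hParσ _ _) hx
    have hπinj : Function.Injective π₀ := by
      intro m m' hmm
      have h1 := hval m
      have h2 := hval m'
      rw [hmm] at h1
      have hvv : g (ofPair hn wF m) = g (ofPair hn wF m') := by rw [h1, h2]
      have s1 := hσval (ofPair hn wF m)
      rw [toPair_ofPair] at s1
      have s2 := hσval (ofPair hn wF m')
      rw [toPair_ofPair] at s2
      rw [hvv] at s1
      exact ofPair_inj hn wF (s1.symm.trans s2)
    have hπbij := Finite.injective_iff_bijective.mp hπinj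
    refine Or.inr (Or.inr ⟨wb, tb, Equiv.ofBijective π₀ hπbij, ?_⟩)
    funext x
    have h1 : g (σ (g x)) = g x := (hfib (g x) (hattain x) (σ (g x))).mpr (Or.inl rfl)
    calc g x = g (σ (g x)) := h1.symm
      _ = g (ofPair hn wF (toPair hn wF x)) := by rw [hσval x]
      _ = ofPair hn tF (π₀ (toPair hn wF x)) := hval _
      _ = gfold hn wb tb (Equiv.ofBijective π₀ hπbij) x := rfl
  · -- dihedral case
    push_neg at hD
    have hinj : Function.Injective g := by
      intro a a' hga
      have h1 : E (σ (g a)) a := (hσc (g a) a).mp (Or.inl rfl)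
      have h2 : E (σ (g a - 1)) a := (hσc (g a - 1) a).mp (Or.inr (by ring))
      have h1' : E (σ (g a)) a' := (hσc (g a) a').mp (Or.inl hga.symm)
      have h2' : E (σ (g a - 1)) a' := (hσc (g a - 1) a').mp (Or.inr (by rw [← hga]; ring))
      have hne : σ (g a - 1) ≠ σ (g a) := by
        have hd := hD (g a - 1)
        rwa [show g a - 1 + 1 = g a from by ring] at hd
      exact E_unique h6 hne h2 h1 h2' h1'
    have hstep : ∀ a, g (a + 1) = g a + 1 ∨ g (a + 1) = g a - 1 := by
      intro a
      have h1 : E (σ (g a)) a := (hσc (g a) a).mp (Or.inl rfl)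
      have h2 : E (σ (g a - 1)) a := (hσc (g a - 1) a).mp (Or.inr (by ring))
      rcases h1 with h1 | h1
      · have h3 : E (g a) (g (a + 1)) := (hσc (g a) (a + 1)).mpr (Or.inr (by linear_combination h1))
        rcases h3 with h3 | h3
        · exfalso
          have h4 := hinj h3
          exact one_ne h6 (by linear_combination h4)
        · exact Or.inl h3
      · rcases h2 with h2 | h2
        · have h3 : E (g a - 1) (g (a + 1)) := (hσc (g a - 1) (a + 1)).mpr (Or.inr (by linear_combination h2))
          rcases h3 with h3 | h3
          · exact Or.inr h3
          · exfalso
            have h4 : g (a + 1) = g a := by rw [h3]; ring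
            have h5 := hinj h4
            exact one_ne h6 (by linear_combination h5)
        · exfalso
          have hcon2 : σ (g a - 1) = σ (g a) := by linear_combination h1 - h2
          have hd := hD (g a - 1)
          rw [show g a - 1 + 1 = g a from by ring] at hd
          exact hd hcon2
    have hflip : ∀ a, g (a + 1) = g a + 1 → g (a + 1 + 1) = g (a + 1) + 1 := by
      intro a ha
      rcases hstep (a + 1) with h | h
      · exact h
      · exfalso
        have h2 : g (a + 1 + 1) = g a := by rw [h, ha]; ring
        have h3 := hinj h2
        exact two_ne h6 (by linear_combination h3)
    have hflip' : ∀ a, g (a + 1) = g a - 1 → g (a + 1 + 1) = g (a + 1) - 1 := by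
      intro a ha
      rcases hstep (a + 1) with h | h
      · exfalso
        have h2 : g (a + 1 + 1) = g a := by rw [h, ha]; ring
        have h3 := hinj h2
        exact two_ne h6 (by linear_combination h3)
      · exact h
    rcases hstep 0 with hs0 | hs0
    · have key : ∀ m : ℕ, g ((m : Fin n)) = g 0 + (m : Fin n) ∧
          g ((m : Fin n) + 1) = g ((m : Fin n)) + 1 := by
        intro m
        induction m with
        | zero =>
          constructor
          · simp
          · simpa using hs0
        | succ m ih =>
          have hc : ((m + 1 : ℕ) : Fin n) = (m : Fin n) + 1 := by push_cast; ring
          constructor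
          · rw [hc, ih.2, ih.1]
            push_cast; ring
          · rw [hc]
            exact hflip _ ih.2
      refine Or.inr (Or.inl ⟨true, g 0, ?_⟩)
      funext a
      have h1 := (key a.val).1
      rw [Fin.cast_val_eq_self] at h1
      rw [h1]
      show g 0 + a = a + g 0
      ring
    · have key : ∀ m : ℕ, g ((m : Fin n)) = g 0 - (m : Fin n) ∧
          g ((m : Fin n) + 1) = g ((m : Fin n)) - 1 := by
        intro m
        induction m with
        | zero =>
          constructor
          · simp
          · simpa using hs0
        | succ m ih =>
          have hc : ((m + 1 : ℕ) : Fin n) = (m : Fin n) + 1 := by push_cast; ring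
          constructor
          · rw [hc, ih.2, ih.1]
            push_cast; ring
          · rw [hc]
            exact hflip' _ ih.2
      refine Or.inr (Or.inl ⟨false, g 0, ?_⟩)
      funext a
      have h1 := (key a.val).1
      rw [Fin.cast_val_eq_self] at h1
      rw [h1]
      show g 0 - a = -a + g 0
      ring


lemma pr_zero : pr (0 : Fin n) = 0 := by unfold pr; simp

lemma pr_one (h2 : 2 ≤ n) : pr (1 : Fin n) = 1 := by unfold pr; rw [val_one_fin h2]

lemma toPair_ofPair_succ (hn : n = 2 * k) (w : Fin n) (m : Fin k) :
    toPair hn w (ofPair hn w m + 1) = m := (pairdec hn w _ m).mp (Or.inr rfl)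

lemma gfold_apply (hn : n = 2 * k) (b1 b2 : Bool) (π : Equiv.Perm (Fin k)) (x : Fin n) :
    gfold hn b1 b2 π x
      = ofPair hn (bif b2 then 1 else 0) (π (toPair hn (bif b1 then 1 else 0) x)) := rfl

lemma gfold_vals (hn : n = 2 * k) (b1 b2 : Bool) (π : Equiv.Perm (Fin k)) (m : Fin k) :
    gfold hn b1 b2 π (ofPair hn (bif b1 then 1 else 0) m)
      = ofPair hn (bif b2 then 1 else 0) (π m) := by
  rw [gfold_apply, toPair_ofPair]

lemma gfold_collide (hn : n = 2 * k) (b1 b2 : Bool) (π : Equiv.Perm (Fin k)) (m : Fin k) :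
    gfold hn b1 b2 π (ofPair hn (bif b1 then 1 else 0) m)
      = gfold hn b1 b2 π (ofPair hn (bif b1 then 1 else 0) m + 1) := by
  rw [gfold_apply, gfold_apply, toPair_ofPair, toPair_ofPair_succ]

lemma val_zero_sub_one (h6 : 6 ≤ n) : ((0 : Fin n) - 1).val = n - 1 := by
  have h1 : ((n - 1 : ℕ) : Fin n) + 1 = 0 := by
    have h3 : ((n - 1 : ℕ) : Fin n) + ((1 : ℕ) : Fin n) = ((n - 1 + 1 : ℕ) : Fin n) :=
      (Nat.cast_add _ _).symm
    rw [Nat.cast_one] at h3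
    rw [h3, show n - 1 + 1 = n from by omega, Fin.natCast_self]
  have h2 : ((n - 1 : ℕ) : Fin n) = 0 - 1 := by linear_combination h1
  rw [← h2, Fin.val_natCast, Nat.mod_eq_of_lt (by omega)]

lemma gdih_zero (ε : Bool) (c : Fin n) : gdih ε c 0 = c := by
  cases ε <;> simp [gdih]

lemma gdih_inj (h6 : 6 ≤ n) :
    Function.Injective (fun p : Bool × Fin n => gdih p.1 p.2) := by
  rintro ⟨ε, c⟩ ⟨ε', c'⟩ h
  simp only at h
  have h0 := congrFun h 0
  rw [gdih_zero, gdih_zero] at h0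
  have h1 := congrFun h 1
  cases ε <;> cases ε'
  · rw [h0]
  · exfalso
    have h2 : (-1 : Fin n) + c = 1 + c' := h1
    rw [← h0] at h2
    exact two_ne h6 (by linear_combination -h2)
  · exfalso
    have h2 : (1 : Fin n) + c = -1 + c' := h1
    rw [← h0] at h2
    exact two_ne h6 (by linear_combination h2)
  · rw [h0]

lemma gfold_inj (hn : n = 2 * k) (hk : 3 ≤ k) :
    Function.Injective
      (fun p : Bool × Bool × Equiv.Perm (Fin k) => gfold hn p.1 p.2.1 p.2.2) := by
  have h6 : 6 ≤ n := by omega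
  have hprc : ∀ b : Bool, pr (bif b then (1 : Fin n) else 0) = bif b then 1 else 0 := by
    intro b
    cases b
    · exact pr_zero
    · exact pr_one (by omega)
  rintro ⟨b1, b2, π⟩ ⟨b1', b2', π'⟩ h
  simp only at h
  have hb2 : b2 = b2' := by
    have h0 := congrFun h 0
    rw [gfold_apply, gfold_apply] at h0
    have hp := congrArg pr h0
    rw [pr_ofPair, pr_ofPair, hprc, hprc] at hp
    cases b2 <;> cases b2' <;> revert hp <;> simp
  subst hb2
  have hb1 : b1 = b1' := by
    have tp00 : (toPair hn (0 : Fin n) 0).val = 0 := by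
      show ((0 : Fin n) - 0).val / 2 = 0
      rw [sub_zero, Fin.val_zero]
    have tp01 : (toPair hn (0 : Fin n) 1).val = 0 := by
      show ((1 : Fin n) - 0).val / 2 = 0
      rw [sub_zero, val_one_fin (by omega)]
    have tp11 : (toPair hn (1 : Fin n) 1).val = 0 := by
      show ((1 : Fin n) - 1).val / 2 = 0
      rw [sub_self, Fin.val_zero]
    have tp10 : (toPair hn (1 : Fin n) 0).val = k - 1 := by
      show ((0 : Fin n) - 1).val / 2 = k - 1
      rw [val_zero_sub_one h6]
      omega
    have hcol : ∀ ρ : Equiv.Perm (Fin k), gfold hn false b2 ρ 0 = gfold hn false b2 ρ 1 := by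
      intro ρ
      rw [gfold_apply, gfold_apply]
      have : toPair hn (bif false then (1:Fin n) else 0) 0
          = toPair hn (bif false then (1:Fin n) else 0) 1 := by
        apply Fin.ext
        show (toPair hn (0 : Fin n) 0).val = (toPair hn (0 : Fin n) 1).val
        rw [tp00, tp01]
      rw [this]
    have hncol : ∀ ρ : Equiv.Perm (Fin k), gfold hn true b2 ρ 0 ≠ gfold hn true b2 ρ 1 := by
      intro ρ hq
      rw [gfold_apply, gfold_apply] at hq
      have h2 := ofPair_inj hn _ hq
      have h3 := ρ.injective h2
      have h4 := congrArg Fin.val h3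
      show False
      rw [show (bif true then (1:Fin n) else 0) = 1 from rfl] at h4
      rw [tp10, tp11] at h4
      omega
    cases b1 <;> cases b1'
    · rfl
    · exfalso
      exact hncol π' (by rw [← h]; exact hcol π)
    · exfalso
      exact hncol π (by rw [h]; exact hcol π')
    · rfl
  subst hb1
  have hππ : π = π' := by
    apply Equiv.ext
    intro m
    have hm := congrFun h (ofPair hn (bif b1 then 1 else 0) m)
    rw [gfold_vals, gfold_vals] at hm
    exact ofPair_inj hn _ hm
  rw [hππ]

lemma const_ne_gdih (h6 : 6 ≤ n) (b : Fin n) (ε : Bool) (c : Fin n) :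
    (fun _ : Fin n => b) ≠ gdih ε c := by
  intro h
  have h0 := congrFun h 0
  have h1 := congrFun h 1
  rw [gdih_zero] at h0
  cases ε
  · have h2 : b = -1 + c := h1
    rw [h0] at h2
    exact one_ne h6 (by linear_combination h2)
  · have h2 : b = 1 + c := h1
    rw [h0] at h2
    exact one_ne h6 (by linear_combination -h2)

lemma const_ne_gfold (hn : n = 2 * k) (hk : 3 ≤ k) (b : Fin n) (b1 b2 : Bool)
    (π : Equiv.Perm (Fin k)) : (fun _ : Fin n => b) ≠ gfold hn b1 b2 π := by
  haveI : NeZero k := ⟨by omega⟩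
  intro h
  have h0 := congrFun h (ofPair hn (bif b1 then 1 else 0) 0)
  have h1 := congrFun h (ofPair hn (bif b1 then 1 else 0) 1)
  rw [gfold_vals] at h0 h1
  have h2 : π 0 = π 1 := ofPair_inj hn _ (h0.symm.trans h1)
  have h3 := π.injective h2
  have h4 := congrArg Fin.val h3
  rw [Fin.val_zero, val_one_fin (show 2 ≤ k by omega)] at h4
  omega

lemma gdih_ne_gfold (hn : n = 2 * k) (hk : 3 ≤ k) (ε : Bool) (c : Fin n) (b1 b2 : Bool)
    (π : Equiv.Perm (Fin k)) : gdih ε c ≠ gfold hn b1 b2 π := by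
  haveI : NeZero k := ⟨by omega⟩
  have h6 : 6 ≤ n := by omega
  intro h
  have hcol := gfold_collide hn b1 b2 π 0
  rw [← h] at hcol
  cases ε <;> simp only [gdih, Bool.false_eq_true, if_false, if_true] at hcol
  · exact one_ne h6 (by linear_combination hcol)
  · exact one_ne h6 (by linear_combination -hcol)

lemma GCond_eq_union (hn : n = 2 * k) (hk : 3 ≤ k) :
    {g : Fin n → Fin n | GCond n g} =
      ((Set.range fun b : Fin n => (fun _ : Fin n => b)) ∪
        (Set.range fun p : Bool × Fin n => gdih p.1 p.2)) ∪
      (Set.range fun p : Bool × Bool × Equiv.Perm (Fin k) => gfold hn p.1 p.2.1 p.2.2) := by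
  ext g
  constructor
  · intro hg
    rcases classify hn hk g hg with ⟨b, rfl⟩ | ⟨ε, c, rfl⟩ | ⟨b1, b2, π, rfl⟩
    · exact Or.inl (Or.inl ⟨b, rfl⟩)
    · exact Or.inl (Or.inr ⟨(ε, c), rfl⟩)
    · exact Or.inr ⟨(b1, b2, π), rfl⟩
  · rintro ((⟨b, rfl⟩ | ⟨⟨ε, c⟩, rfl⟩) | ⟨⟨b1, b2, π⟩, rfl⟩)
    · exact const_GCond b
    · exact gdih_GCond ε c
    · exact gfold_GCond hn (by omega) b1 b2 π

lemma ncard_GCond (hn : n = 2 * k) (hk : 3 ≤ k) :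
    {g : Fin n → Fin n | GCond n g}.ncard = 4 * Nat.factorial k + 3 * n := by
  classical
  have h6 : 6 ≤ n := by omega
  rw [GCond_eq_union hn hk]
  have hd1 : Disjoint
      ((Set.range fun b : Fin n => (fun _ : Fin n => b)) ∪
        (Set.range fun p : Bool × Fin n => gdih p.1 p.2))
      (Set.range fun p : Bool × Bool × Equiv.Perm (Fin k) => gfold hn p.1 p.2.1 p.2.2) := by
    rw [Set.disjoint_left]
    rintro g (⟨b, rfl⟩ | ⟨⟨ε, c⟩, rfl⟩) ⟨⟨b1, b2, π⟩, hfold⟩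
    · exact const_ne_gfold hn hk b b1 b2 π hfold.symm
    · exact gdih_ne_gfold hn hk ε c b1 b2 π hfold.symm
  have hd2 : Disjoint (Set.range fun b : Fin n => (fun _ : Fin n => b))
      (Set.range fun p : Bool × Fin n => gdih p.1 p.2) := by
    rw [Set.disjoint_left]
    rintro g ⟨b, rfl⟩ ⟨⟨ε, c⟩, hdih⟩
    exact const_ne_gdih h6 b ε c hdih.symm
  rw [Set.ncard_union_eq hd1 (Set.toFinite _) (Set.toFinite _),
      Set.ncard_union_eq hd2 (Set.toFinite _) (Set.toFinite _)]
  have hinjc : Function.Injective (fun b : Fin n => (fun _ : Fin n => b)) := by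
    intro b b' hb
    exact congrFun hb 0
  have e1 : (Set.range fun b : Fin n => (fun _ : Fin n => b)).ncard = n := by
    rw [← Set.image_univ, Set.ncard_image_of_injective _ hinjc, Set.ncard_univ,
      Nat.card_eq_fintype_card, Fintype.card_fin]
  have e2 : (Set.range fun p : Bool × Fin n => gdih p.1 p.2).ncard = 2 * n := by
    rw [← Set.image_univ, Set.ncard_image_of_injective _ (gdih_inj h6), Set.ncard_univ,
      Nat.card_eq_fintype_card, Fintype.card_prod, Fintype.card_bool, Fintype.card_fin]
  have e3 : (Set.range fun p : Bool × Bool × Equiv.Perm (Fin k) =>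
      gfold hn p.1 p.2.1 p.2.2).ncard = 4 * Nat.factorial k := by
    rw [← Set.image_univ, Set.ncard_image_of_injective _ (gfold_inj hn hk), Set.ncard_univ,
      Nat.card_eq_fintype_card, Fintype.card_prod, Fintype.card_prod, Fintype.card_bool,
      Fintype.card_perm, Fintype.card_fin]
    ring
  rw [e1, e2, e3]
  ring

end Comb
end NeuralAux

/-- For the circulant code with support `p = 2` on `n = 2k` neurons with `k ≥ 3`,
the number of neural ring endomorphisms is `2² · (n/2)! + 3n`. -/
theorem count_neuralEndo_support_two_even (n k : ℕ) (hk : 3 ≤ k) (hn : n = 2 * k) :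
    {φ : (↥(circCode n 2) → ZMod 2) →+* (↥(circCode n 2) → ZMod 2) |
      IsNeuralEndo (circCode n 2) φ}.ncard =
      2 ^ 2 * Nat.factorial (n / 2) + 3 * n := by
  haveI : NeZero n := ⟨by omega⟩
  rw [NeuralAux.ncard_step n (by omega), NeuralAux.ncard_GCond hn hk,
    show n / 2 = k from by omega]
  ring
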